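/- Let F_i be a coordinate face of the weight polytope and η_i the least element of P_i in the dominance order. Then F_i is a facet (has dimension n−1) if and only if (η_i, ω̃_j) ≠ m_j for all j ≠ i, where ω̃_j are the fundamental coweights. -/

import Mathlib

/-!
The face `F_i` lies in the hyperplane `cᵢ = mᵢ`, so its dimension is at most `n - 1`, and its
vertices are the orbit points `wλ` with `cᵢ(wλ) = mᵢ`. By the highest-weight bound `wλ ≤ λ`,
such a vertex lies in `P_i`, hence `η ≤ wλ ≤ λ`; so if `cⱼ(η) = mⱼ` for some `j ≠ i`, the whole face
lies in the codimension-two subspace `cᵢ = mᵢ, cⱼ = mⱼ`. Conversely, if `cₖ(η) ≠ mₖ` for all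
`k ≠ i`, then `λ - η = ∑_{k ≠ i} aₖ αₖ` with all `aₖ > 0` is a direction of `F_i`, and the space `D` of directions is stable under the `sₖ`,
`k ≠ i`. For `v ∈ D` with `⟪v, αₗ⟫ ≠ 0`, `v - sₗ v` is a nonzero multiple of `αₗ`, which peels
the simple roots off one at a time: `D` contains every `αₖ`, `k ≠ i`, and is the hyperplane.

The highest-weight bound comes from raising any orbit point by simple reflections to a dominant
one, which must be `λ`, since the dominant point of an orbit is unique. That uniqueness rests on
the positivity of `w αₖ` when `ℓ(w sₖ) > ℓ(w)`, proved by induction on the length and reduced to the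
rank-two computation in the dihedral subgroup `⟨sⱼ, sₖ⟩`, where the Cartan integers leave only the
types `A₁ × A₁`, `A₂`, `B₂`, `G₂`.
-/

open RealInnerProductSpace

noncomputable section

variable {E : Type*} [NormedAddCommGroup E] [InnerProductSpace ℝ E] [FiniteDimensional ℝ E]

/-- Reflection in the hyperplane orthogonal to `β`. -/
def sref (β : E) : E ≃ₗᵢ[ℝ] E := Submodule.reflection (ℝ ∙ β)ᗮ

/-- Data of a system of simple roots of a (crystallographic, irreducible) root system:
the simple roots form a basis of the euclidean space, Cartan integers are integral,
distinct simple roots have nonpositive inner products, and the Dynkin diagram is connected. -/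
structure RootData (n : ℕ) (E : Type*) [NormedAddCommGroup E] [InnerProductSpace ℝ E] where
  α : Fin n → E
  b : Module.Basis (Fin n) ℝ E
  hb : ∀ i, b i = α i
  cartan : ∀ i j, ∃ z : ℤ, (z : ℝ) * ⟪α j, α j⟫ = 2 * ⟪α i, α j⟫
  offdiag : ∀ i j : Fin n, i ≠ j → ⟪α i, α j⟫ ≤ 0
  conn : ∀ i j : Fin n, Relation.ReflTransGen (fun a b => a ≠ b ∧ ⟪α a, α b⟫ ≠ 0) i j

namespace RootData

variable {n : ℕ} (S : RootData n E)

/-- The simple reflections. -/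
def s (i : Fin n) : E ≃ₗᵢ[ℝ] E := sref (S.α i)

/-- The Weyl group, generated by the simple reflections. -/
def W : Subgroup (E ≃ₗᵢ[ℝ] E) := Subgroup.closure (Set.range S.s)

/-- The standard parabolic subgroup generated by the simple reflections indexed by `I`. -/
def WI (I : Set (Fin n)) : Subgroup (E ≃ₗᵢ[ℝ] E) := Subgroup.closure (S.s '' I)

/-- The set of roots:  the Weyl group orbit of the simple roots. -/
def roots : Set E := {β | ∃ w ∈ S.W, ∃ i, β = w (S.α i)}

/-- `x` is dominant: nonnegative inner product with every simple root. -/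
def Dominant (x : E) : Prop := ∀ i, 0 ≤ ⟪x, S.α i⟫

/-- The dominant weight `λ = Σ mᵢ αᵢ` (with nonnegative integer coefficients). -/
def lam (m : Fin n → ℕ) : E := ∑ j, (m j : ℝ) • S.α j

/-- `λ` is an integral weight: `2(λ,αᵢ)/(αᵢ,αᵢ)` is a (nonnegative) integer. -/
def IntegralDom (m : Fin n → ℕ) : Prop :=
  ∀ i, ∃ z : ℕ, (z : ℝ) * ⟪S.α i, S.α i⟫ = 2 * ⟪S.lam m, S.α i⟫

/-- The Weyl group orbit of a point. -/
def orbit (x : E) : Set E := (fun w : E ≃ₗᵢ[ℝ] E => w x) '' (S.W : Set (E ≃ₗᵢ[ℝ] E))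

/-- The weight polytope: the convex hull of the Weyl group orbit of `λ`. -/
def poly (m : Fin n → ℕ) : Set E := convexHull ℝ (S.orbit (S.lam m))

/-- `c μ i` is the coefficient of `αᵢ` when `μ` is expressed in the basis of simple roots. -/
def c (μ : E) (i : Fin n) : ℝ := S.b.repr μ i

/-- The set of weights `P(λ)`:  points of the weight polytope lying in the root lattice. -/
def Pw (m : Fin n → ℕ) : Set E := {μ ∈ S.poly m | ∀ i, ∃ z : ℤ, S.c μ i = z}

/-- `P_I`: the weights whose `αᵢ`-coefficient equals `mᵢ` for all `i ∈ I`. -/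
def P_ (m : Fin n → ℕ) (I : Set (Fin n)) : Set E :=
  {μ ∈ S.Pw m | ∀ i ∈ I, S.c μ i = m i}

/-- The standard parabolic face `F_I` of the weight polytope. -/
def F_ (m : Fin n → ℕ) (I : Set (Fin n)) : Set E :=
  {x ∈ S.poly m | ∀ i ∈ I, S.c x i = m i}

/-- The dominance order: `μ ≤ ν` iff `ν - μ` is a nonnegative integral sum of simple roots. -/
def wle (μ ν : E) : Prop := ∃ a : Fin n → ℕ, ν - μ = ∑ i, (a i : ℝ) • S.α i

/-- Adjacency in the extended Dynkin diagram with extra node `-λ` (encoded as `none`). -/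
def adj (m : Fin n → ℕ) : Option (Fin n) → Option (Fin n) → Prop
  | none, none => False
  | none, some j => 0 < ⟪S.lam m, S.α j⟫
  | some i, none => 0 < ⟪S.lam m, S.α i⟫
  | some i, some j => i ≠ j ∧ ⟪S.α i, S.α j⟫ ≠ 0

/-- One step in the extended Dynkin diagram, staying within the vertices `{-λ} ∪ {αₖ : k ∈ K}`. -/
def within (m : Fin n → ℕ) (K : Set (Fin n)) (a b : Option (Fin n)) : Prop :=
  S.adj m a b ∧ (∀ i, a = some i → i ∈ K) ∧ (∀ i, b = some i → i ∈ K)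

/-- `I̅⁰`: indices of the simple roots in the connected component of `-λ` in the subdiagram
of the extended Dynkin diagram on the complement of `I` together with `-λ`. -/
def comp0 (m : Fin n → ℕ) (I : Set (Fin n)) : Set (Fin n) :=
  {j | j ∉ I ∧ Relation.ReflTransGen (S.within m Iᶜ) none (some j)}

/-- The subdiagram of the extended Dynkin diagram on `{-λ} ∪ {αₖ : k ∈ K}` is connected. -/
def ConnWith (m : Fin n → ℕ) (K : Set (Fin n)) : Prop :=
  ∀ j ∈ K, Relation.ReflTransGen (S.within m K) none (some j)

/-- `ω` is the `i`-th fundamental coweight: `(ω, αⱼ) = δᵢⱼ`. -/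
def IsCoweight (i : Fin n) (ω : E) : Prop :=
  ∀ j, ⟪ω, S.α j⟫ = if j = i then 1 else 0

end RootData

section

variable {V : Type*} [NormedAddCommGroup V] [InnerProductSpace ℝ V]

theorem sref_apply (β x : V) :
    sref β x = x - (2 * ⟪β, x⟫ / ⟪β, β⟫) • β := by
  rw [sref, Submodule.reflection_orthogonal_apply, Submodule.reflection_singleton_apply,
    real_inner_self_eq_norm_sq]
  simp only [RCLike.ofReal_real_eq_id, id_eq, two_smul]
  rw [div_eq_mul_inv, div_eq_mul_inv]
  module

theorem det_sref [FiniteDimensional ℝ V] {β : V} (hβ : β ≠ 0) :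
    LinearMap.det ((sref β).toLinearEquiv : V →ₗ[ℝ] V) = -1 := by
  rw [sref, Submodule.det_reflection, Submodule.orthogonal_orthogonal,
    finrank_span_singleton hβ, pow_one]

theorem eq_of_mem_convexHull_of_forall_le {X : Set V} {f g : V →ₗ[ℝ] ℝ} {a b : ℝ}
    (hf : ∀ y ∈ X, f y ≤ a) (hfg : ∀ y ∈ X, f y = a → g y = b) {x : V}
    (hx : x ∈ convexHull ℝ X) (hfx : f x = a) : g x = b := by
  obtain ⟨ι, _, w, z, hw0, hw1, hz, rfl⟩ := mem_convexHull_iff_exists_fintype.mp hx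
  have hgap : ∑ i, w i * (a - f (z i)) = 0 := by
    simp only [map_sum, map_smul, smul_eq_mul] at hfx
    simp only [mul_sub, Finset.sum_sub_distrib, ← Finset.sum_mul, hw1, one_mul, hfx, sub_self]
  have hface (i : ι) : w i * g (z i) = w i * b := by
    have := (Finset.sum_eq_zero_iff_of_nonneg fun i _ =>
      mul_nonneg (hw0 i) (sub_nonneg.2 (hf _ (hz i)))).mp hgap i (Finset.mem_univ i)
    rcases mul_eq_zero.mp this with h | h
    · rw [h, zero_mul, zero_mul]
    · rw [hfg _ (hz i) (by linarith)]
  simp only [map_sum, map_smul, smul_eq_mul, hface, ← Finset.sum_mul, hw1, one_mul]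

theorem span_sub_eq_vectorSpan (F : Set V) :
    Submodule.span ℝ {x | ∃ μ ∈ F, ∃ ν ∈ F, x = μ - ν} = vectorSpan ℝ F := by
  rw [vectorSpan_def]
  congr 1
  ext x
  simp [Set.mem_vsub, eq_comm]

theorem vectorSpan_le_ker {F : Set V} {f : V →ₗ[ℝ] ℝ} {r : ℝ} (h : ∀ x ∈ F, f x = r) :
    vectorSpan ℝ F ≤ LinearMap.ker f := by
  rw [vectorSpan_def, Submodule.span_le]
  rintro _ ⟨μ, hμ, ν, hν, rfl⟩
  simp [h μ hμ, h ν hν]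

theorem apply_mem_vectorSpan {F : Set V} {φ : V →ₗ[ℝ] V} (h : Set.MapsTo φ F F) {v : V}
    (hv : v ∈ vectorSpan ℝ F) : φ v ∈ vectorSpan ℝ F := by
  suffices vectorSpan ℝ F ≤ (vectorSpan ℝ F).comap φ from this hv
  refine Submodule.span_le.mpr ?_
  rintro _ ⟨μ, hμ, ν, hν, rfl⟩
  simpa using vsub_mem_vectorSpan ℝ (h hμ) (h hν)

namespace RootData

variable {n : ℕ} (S : RootData n V)

theorem alpha_ne_zero (i : Fin n) : S.α i ≠ 0 := S.hb i ▸ S.b.ne_zero i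

theorem inner_alpha_self_pos (i : Fin n) : 0 < ⟪S.α i, S.α i⟫ :=
  real_inner_self_pos.mpr (S.alpha_ne_zero i)

theorem s_apply (i : Fin n) (x : V) :
    S.s i x = x - (2 * ⟪S.α i, x⟫ / ⟪S.α i, S.α i⟫) • S.α i :=
  sref_apply _ _

theorem s_alpha_self (i : Fin n) : S.s i (S.α i) = -S.α i := by
  rw [s_apply, mul_div_assoc, div_self (S.inner_alpha_self_pos i).ne', mul_one]
  module

theorem s_alpha_of_cartan {p q : Fin n} {A : ℝ} (h : A * ⟪S.α p, S.α p⟫ = 2 * ⟪S.α q, S.α p⟫) :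
    S.s p (S.α q) = S.α q - A • S.α p := by
  rw [s_apply, real_inner_comm, ← h, mul_div_cancel_right₀ A (S.inner_alpha_self_pos p).ne']

theorem s_apply_of_inner_eq_zero {i : Fin n} {x : V} (h : ⟪x, S.α i⟫ = 0) : S.s i x = x := by
  simp [s_apply, real_inner_comm, h]

theorem s_mul_self (i : Fin n) : S.s i * S.s i = 1 := Submodule.reflection_mul_reflection _

theorem s_mem_W (i : Fin n) : S.s i ∈ S.W := Subgroup.subset_closure (Set.mem_range_self i)

theorem det_s (i : Fin n) : LinearMap.det ((S.s i).toLinearEquiv : V →ₗ[ℝ] V) = -1 :=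
  have := Module.Finite.of_basis S.b
  det_sref (S.alpha_ne_zero i)

theorem c_eq_coord (x : V) (k : Fin n) : S.c x k = S.b.coord k x := rfl

@[simp] theorem c_add (x y : V) (k : Fin n) : S.c (x + y) k = S.c x k + S.c y k := by
  simp [c_eq_coord]

@[simp] theorem c_sub (x y : V) (k : Fin n) : S.c (x - y) k = S.c x k - S.c y k := by
  simp [c_eq_coord]

@[simp] theorem c_smul (r : ℝ) (x : V) (k : Fin n) : S.c (r • x) k = r * S.c x k := by
  simp [c_eq_coord]

@[simp] theorem c_zero (k : Fin n) : S.c 0 k = 0 := by simp [c_eq_coord]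

@[simp] theorem c_alpha (l k : Fin n) : S.c (S.α l) k = if l = k then 1 else 0 := by
  rw [← S.hb l, c, S.b.repr_self l, Finsupp.single_apply]

theorem c_sum {ι : Type*} (t : Finset ι) (f : ι → V) (k : Fin n) :
    S.c (∑ a ∈ t, f a) k = ∑ a ∈ t, S.c (f a) k := by
  simp [c_eq_coord]

theorem c_sum_smul_alpha (f : Fin n → ℝ) (k : Fin n) : S.c (∑ l, f l • S.α l) k = f k := by
  simp [c_sum]

theorem sum_c_smul_alpha (x : V) : ∑ k, S.c x k • S.α k = x := by
  conv_rhs => rw [← S.b.sum_repr x]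
  simp only [c, S.hb]

theorem c_lam (m : Fin n → ℕ) (k : Fin n) : S.c (S.lam m) k = m k :=
  S.c_sum_smul_alpha _ k

theorem inner_eq_c_of_isCoweight {j : Fin n} {ω : V} (hω : S.IsCoweight j ω) (x : V) :
    ⟪x, ω⟫ = S.c x j := by
  rw [real_inner_comm]
  conv_lhs => rw [← S.sum_c_smul_alpha x, inner_sum]
  simp [real_inner_smul_right, hω _]

def InRootLattice (x : V) : Prop := ∀ k, ∃ z : ℤ, S.c x k = z

theorem inRootLattice_alpha (l : Fin n) : S.InRootLattice (S.α l) := fun k =>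
  ⟨if l = k then 1 else 0, by rw [c_alpha]; split_ifs <;> simp⟩

theorem inRootLattice_lam (m : Fin n → ℕ) : S.InRootLattice (S.lam m) := fun k =>
  ⟨m k, by rw [c_lam]; simp⟩

theorem InRootLattice.sub_zsmul {x y : V} (hx : S.InRootLattice x) (hy : S.InRootLattice y)
    (t : ℤ) : S.InRootLattice (x - (t : ℝ) • y) := fun k => by
  obtain ⟨a, ha⟩ := hx k
  obtain ⟨b, hb⟩ := hy k
  exact ⟨a - t * b, by simp [ha, hb]⟩

theorem exists_int_mul_inner_self_eq {x : V} (hx : S.InRootLattice x) (l : Fin n) :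
    ∃ t : ℤ, t * ⟪S.α l, S.α l⟫ = 2 * ⟪x, S.α l⟫ := by
  choose z hz using hx
  choose a ha using S.cartan
  refine ⟨∑ k, z k * a k l, ?_⟩
  conv_rhs => rw [← S.sum_c_smul_alpha x]
  simp only [sum_inner, real_inner_smul_left, hz, Finset.mul_sum, Int.cast_sum, Int.cast_mul,
    Finset.sum_mul, mul_assoc, ha]
  exact Finset.sum_congr rfl fun k _ => by ring

theorem exists_s_apply_eq_sub_zsmul {x : V} (hx : S.InRootLattice x) (l : Fin n) :
    ∃ t : ℤ, S.s l x = x - (t : ℝ) • S.α l ∧ t * ⟪S.α l, S.α l⟫ = 2 * ⟪x, S.α l⟫ := by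
  obtain ⟨t, ht⟩ := S.exists_int_mul_inner_self_eq hx l
  refine ⟨t, ?_, ht⟩
  rw [s_apply, real_inner_comm, ← ht, mul_div_cancel_right₀ _ (S.inner_alpha_self_pos l).ne']

def wordProd (l : List (Fin n)) : V ≃ₗᵢ[ℝ] V := (l.map S.s).prod

@[simp] theorem wordProd_nil : S.wordProd [] = 1 := rfl

@[simp] theorem wordProd_cons (a : Fin n) (l : List (Fin n)) :
    S.wordProd (a :: l) = S.s a * S.wordProd l := by
  simp [wordProd]

@[simp] theorem wordProd_append (l l' : List (Fin n)) :
    S.wordProd (l ++ l') = S.wordProd l * S.wordProd l' := by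
  simp [wordProd]

theorem wordProd_singleton (a : Fin n) : S.wordProd [a] = S.s a := by
  simp [wordProd]

theorem wordProd_cons_apply (a : Fin n) (l : List (Fin n)) (x : V) :
    S.wordProd (a :: l) x = S.s a (S.wordProd l x) := by
  rw [wordProd_cons]; rfl

theorem wordProd_mem_W (l : List (Fin n)) : S.wordProd l ∈ S.W := by
  induction l with
  | nil => exact S.W.one_mem
  | cons a l ih => rw [wordProd_cons]; exact S.W.mul_mem (S.s_mem_W a) ih

theorem wordProd_reverse (l : List (Fin n)) : S.wordProd l.reverse = (S.wordProd l)⁻¹ := by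
  induction l with
  | nil => simp
  | cons a l ih =>
    rw [List.reverse_cons, wordProd_append, ih, wordProd_singleton, wordProd_cons, mul_inv_rev,
      inv_eq_of_mul_eq_one_left (S.s_mul_self a)]

theorem exists_wordProd_eq {w : V ≃ₗᵢ[ℝ] V} (hw : w ∈ S.W) : ∃ l, S.wordProd l = w := by
  induction hw using Subgroup.closure_induction with
  | mem u hu =>
    obtain ⟨a, rfl⟩ := hu
    exact ⟨[a], S.wordProd_singleton a⟩
  | one => exact ⟨[], rfl⟩
  | mul u v _ _ hu hv =>
    obtain ⟨lu, rfl⟩ := hu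
    obtain ⟨lv, rfl⟩ := hv
    exact ⟨lu ++ lv, S.wordProd_append lu lv⟩
  | inv u _ hu =>
    obtain ⟨lu, rfl⟩ := hu
    exact ⟨lu.reverse, S.wordProd_reverse lu⟩

theorem InRootLattice.wordProd_apply {x : V} (hx : S.InRootLattice x) (l : List (Fin n)) :
    S.InRootLattice (S.wordProd l x) := by
  induction l with
  | nil => exact hx
  | cons a l ih =>
    obtain ⟨t, ht, -⟩ := S.exists_s_apply_eq_sub_zsmul ih a
    rw [wordProd_cons_apply, ht]
    exact ih.sub_zsmul S (S.inRootLattice_alpha a) t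

theorem InRootLattice.apply_of_mem_W {x : V} (hx : S.InRootLattice x) {w : V ≃ₗᵢ[ℝ] V}
    (hw : w ∈ S.W) : S.InRootLattice (w x) := by
  obtain ⟨l, rfl⟩ := S.exists_wordProd_eq hw
  exact hx.wordProd_apply S l

theorem det_wordProd (l : List (Fin n)) :
    LinearMap.det ((S.wordProd l).toLinearEquiv : V →ₗ[ℝ] V) = (-1) ^ l.length := by
  induction l with
  | nil => exact LinearMap.det_id
  | cons a l ih =>
    rw [wordProd_cons, show ((S.s a * S.wordProd l).toLinearEquiv : V →ₗ[ℝ] V) =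
      ((S.s a).toLinearEquiv : V →ₗ[ℝ] V) ∘ₗ (S.wordProd l).toLinearEquiv from rfl,
      LinearMap.det_comp, ih, S.det_s a, List.length_cons, pow_succ']

def length (w : V ≃ₗᵢ[ℝ] V) : ℕ := sInf {k | ∃ l : List (Fin n), l.length = k ∧ S.wordProd l = w}

theorem exists_wordProd_length {w : V ≃ₗᵢ[ℝ] V} (hw : w ∈ S.W) :
    ∃ l, l.length = S.length w ∧ S.wordProd l = w := by
  obtain ⟨l, hl⟩ := S.exists_wordProd_eq hw
  exact Nat.sInf_mem (s := {k | ∃ l : List (Fin n), l.length = k ∧ S.wordProd l = w})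
    ⟨l.length, l, rfl, hl⟩

theorem length_le {w : V ≃ₗᵢ[ℝ] V} {l : List (Fin n)} (h : S.wordProd l = w) :
    S.length w ≤ l.length :=
  Nat.sInf_le ⟨l, rfl, h⟩

theorem eq_one_of_length_eq_zero {w : V ≃ₗᵢ[ℝ] V} (hw : w ∈ S.W) (h : S.length w = 0) :
    w = 1 := by
  obtain ⟨l, hl, rfl⟩ := S.exists_wordProd_length hw
  rw [h, List.length_eq_zero_iff] at hl
  rw [hl, wordProd_nil]

theorem length_mul_s_le {w : V ≃ₗᵢ[ℝ] V} (hw : w ∈ S.W) (k : Fin n) :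
    S.length (w * S.s k) ≤ S.length w + 1 := by
  obtain ⟨l, hl, rfl⟩ := S.exists_wordProd_length hw
  calc S.length (S.wordProd l * S.s k) ≤ (l ++ [k]).length :=
        S.length_le (by rw [wordProd_append, wordProd_singleton])
    _ = _ := by simp [hl]

theorem length_le_mul_wordProd {w : V ≃ₗᵢ[ℝ] V} (hw : w ∈ S.W) (l : List (Fin n)) :
    S.length w ≤ S.length (w * S.wordProd l) + l.length := by
  induction l using List.reverseRecOn generalizing w with
  | nil => simp
  | append_singleton l a ih =>
    have h := S.length_mul_s_le (S.W.mul_mem hw (S.wordProd_mem_W (l ++ [a]))) a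
    rw [show w * S.wordProd (l ++ [a]) * S.s a = w * S.wordProd l by
      rw [wordProd_append, wordProd_singleton, mul_assoc, mul_assoc, S.s_mul_self, mul_one]] at h
    have := ih hw
    simp only [List.length_append, List.length_singleton]
    omega

theorem length_mul_s_ne {w : V ≃ₗᵢ[ℝ] V} (hw : w ∈ S.W) (k : Fin n) :
    S.length (w * S.s k) ≠ S.length w := by
  intro h
  obtain ⟨l, hl, rfl⟩ := S.exists_wordProd_length hw
  obtain ⟨l', hl', hl'w⟩ := S.exists_wordProd_length (S.W.mul_mem hw (S.s_mem_W k))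
  have hdet := congrArg (fun u : V ≃ₗᵢ[ℝ] V => LinearMap.det (u.toLinearEquiv : V →ₗ[ℝ] V))
    (hl'w.trans (S.wordProd_singleton k ▸ (S.wordProd_append l [k]).symm))
  simp only [det_wordProd, List.length_append, List.length_singleton, hl', h, hl] at hdet
  rcases neg_one_pow_eq_or ℝ (S.length (S.wordProd l)) with h1 | h1 <;>
    rw [pow_succ, h1] at hdet <;> norm_num at hdet

theorem length_mul_s_cases {w : V ≃ₗᵢ[ℝ] V} (hw : w ∈ S.W) (k : Fin n) :
    S.length (w * S.s k) = S.length w + 1 ∨ S.length (w * S.s k) + 1 = S.length w := by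
  have h1 := S.length_mul_s_le hw k
  have h2 := S.length_le_mul_wordProd hw [k]
  rw [wordProd_singleton, List.length_singleton] at h2
  have := S.length_mul_s_ne hw k
  omega

theorem exists_length_mul_s_lt {w : V ≃ₗᵢ[ℝ] V} (hw : w ∈ S.W) (h : S.length w ≠ 0) :
    ∃ j, S.length (w * S.s j) + 1 = S.length w := by
  obtain ⟨l, hl, hlw⟩ := S.exists_wordProd_length hw
  rcases l.eq_nil_or_concat with rfl | ⟨l', j, rfl⟩
  · exact absurd hl.symm (by simpa using h)
  refine ⟨j, ?_⟩
  have hl' : S.wordProd l' = w * S.s j := by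
    rw [← hlw, List.concat_eq_append, wordProd_append, wordProd_singleton, mul_assoc,
      S.s_mul_self, mul_one]
  have := S.length_le hl'
  have := S.length_mul_s_cases hw j
  simp only [List.concat_eq_append, List.length_append, List.length_singleton] at hl
  omega

def altWord (a b : Fin n) : ℕ → List (Fin n)
  | 0 => []
  | t + 1 => a :: altWord b a t

@[simp] theorem altWord_length (a b : Fin n) (t : ℕ) : (altWord a b t).length = t := by
  induction t generalizing a b with
  | zero => rfl
  | succ t ih => simp [altWord, ih]

theorem exists_altWord_succ_succ (a b : Fin n) (t : ℕ) :
    ∃ x y, (x = a ∧ y = b ∨ x = b ∧ y = a) ∧ altWord a b (t + 1) = altWord a b t ++ [x] ∧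
      altWord a b (t + 2) = altWord a b (t + 1) ++ [y] := by
  induction t generalizing a b with
  | zero => exact ⟨a, b, Or.inl ⟨rfl, rfl⟩, rfl, rfl⟩
  | succ t ih =>
    obtain ⟨x, y, hxy, h1, h2⟩ := ih b a
    refine ⟨x, y, hxy.symm, ?_, ?_⟩
    · rw [altWord, h1]; rfl
    · rw [altWord, h2]; rfl

theorem inner_alpha_sq_lt {p q : Fin n} (hpq : p ≠ q) :
    ⟪S.α p, S.α q⟫ ^ 2 < ⟪S.α p, S.α p⟫ * ⟪S.α q, S.α q⟫ := by
  have hp := S.inner_alpha_self_pos p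
  set v := S.α q - (⟪S.α p, S.α q⟫ / ⟪S.α p, S.α p⟫) • S.α p
  have hv : v ≠ 0 := fun h => by simpa [v, hpq] using congrArg (S.c · q) h
  have hvv : ⟪v, v⟫ = ⟪S.α q, S.α q⟫ - ⟪S.α p, S.α q⟫ ^ 2 / ⟪S.α p, S.α p⟫ := by
    simp only [v, inner_sub_left, inner_sub_right, real_inner_smul_left, real_inner_smul_right,
      real_inner_comm (S.α p) (S.α q)]
    field_simp
    ring
  have := real_inner_self_pos.mpr hv
  rw [hvv, sub_pos, div_lt_iff₀ hp] at this
  linarith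

theorem int_cases_of_mul_lt_four {a b : ℤ} (ha : a ≤ 0) (hb : b ≤ 0) (hab : a = 0 ↔ b = 0)
    (h4 : a * b < 4) :
    a = 0 ∧ b = 0 ∨ a = -1 ∧ b = -1 ∨ a = -1 ∧ b = -2 ∨ a = -2 ∧ b = -1 ∨
      a = -1 ∧ b = -3 ∨ a = -3 ∧ b = -1 := by
  have : -3 ≤ a := by
    by_contra h
    have : b ≤ -1 := by omega
    nlinarith
  have : -3 ≤ b := by
    by_contra h
    have : a ≤ -1 := by omega
    nlinarith
  interval_cases a <;> interval_cases b <;> simp_all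

theorem cartan_eq_zero_iff {p q : Fin n} {z : ℤ}
    (h : z * ⟪S.α p, S.α p⟫ = 2 * ⟪S.α q, S.α p⟫) : z = 0 ↔ ⟪S.α p, S.α q⟫ = 0 := by
  rw [real_inner_comm (S.α p) (S.α q)] at h
  constructor
  · rintro rfl
    simpa using h.symm
  · intro h0
    rw [h0, mul_zero] at h
    exact_mod_cast (mul_eq_zero.mp h).resolve_right (S.inner_alpha_self_pos p).ne'

/-- The Cartan integers of the rank-two systems `A₁ × A₁`, `A₂`, `B₂`, `G₂`; `m` is the order of
`sₚ s_q`, with `AB = 4 cos² (π / m)`. -/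
theorem cartan_cases {p q : Fin n} (hpq : p ≠ q) :
    ∃ (A B : ℝ) (m : ℕ), A * ⟪S.α p, S.α p⟫ = 2 * ⟪S.α q, S.α p⟫ ∧
      B * ⟪S.α q, S.α q⟫ = 2 * ⟪S.α p, S.α q⟫ ∧
      (A = 0 ∧ B = 0 ∧ m = 2 ∨ A = -1 ∧ B = -1 ∧ m = 3 ∨ A = -1 ∧ B = -2 ∧ m = 4 ∨
        A = -2 ∧ B = -1 ∧ m = 4 ∨ A = -1 ∧ B = -3 ∧ m = 6 ∨ A = -3 ∧ B = -1 ∧ m = 6) := by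
  obtain ⟨a, ha⟩ := S.cartan q p
  obtain ⟨b, hb⟩ := S.cartan p q
  have hab : a = 0 ↔ b = 0 := by
    rw [S.cartan_eq_zero_iff ha, S.cartan_eq_zero_iff hb, real_inner_comm]
  have hp := S.inner_alpha_self_pos p
  have hq := S.inner_alpha_self_pos q
  have hpq' := S.offdiag p q hpq
  rw [real_inner_comm (S.α p) (S.α q)] at ha
  have ha0 : a ≤ 0 := by exact_mod_cast (show (a : ℝ) ≤ 0 by nlinarith)
  have hb0 : b ≤ 0 := by exact_mod_cast (show (b : ℝ) ≤ 0 by nlinarith)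
  have hab4 : a * b < 4 := by
    have hprod : ((a * b : ℤ) : ℝ) * (⟪S.α p, S.α p⟫ * ⟪S.α q, S.α q⟫) =
        4 * ⟪S.α p, S.α q⟫ ^ 2 := by
      push_cast
      linear_combination (b * ⟪S.α q, S.α q⟫) * ha + 2 * ⟪S.α p, S.α q⟫ * hb
    have := S.inner_alpha_sq_lt hpq
    have h4 : ((a * b : ℤ) : ℝ) < 4 := (mul_lt_mul_iff_left₀ (mul_pos hp hq)).mp (by linarith)
    exact_mod_cast h4
  refine ⟨a, b, ?_⟩
  rw [real_inner_comm (S.α p) (S.α q)]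
  rcases int_cases_of_mul_lt_four ha0 hb0 hab hab4 with
    ⟨rfl, rfl⟩ | ⟨rfl, rfl⟩ | ⟨rfl, rfl⟩ | ⟨rfl, rfl⟩ | ⟨rfl, rfl⟩ | ⟨rfl, rfl⟩
  exacts [⟨2, ha, hb, by norm_num⟩, ⟨3, ha, hb, by norm_num⟩, ⟨4, ha, hb, by norm_num⟩,
    ⟨4, ha, hb, by norm_num⟩, ⟨6, ha, hb, by norm_num⟩, ⟨6, ha, hb, by norm_num⟩]

theorem s_apply_plane_left {p q : Fin n} {A : ℝ}
    (hA : A * ⟪S.α p, S.α p⟫ = 2 * ⟪S.α q, S.α p⟫) (u v : ℝ) :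
    S.s p (u • S.α p + v • S.α q) = (-u - A * v) • S.α p + v • S.α q := by
  rw [map_add, map_smul, map_smul, S.s_alpha_self p, S.s_alpha_of_cartan hA]
  module

theorem s_apply_plane_right {p q : Fin n} {B : ℝ}
    (hB : B * ⟪S.α q, S.α q⟫ = 2 * ⟪S.α p, S.α q⟫) (u v : ℝ) :
    S.s q (u • S.α p + v • S.α q) = u • S.α p + (-B * u - v) • S.α q := by
  rw [map_add, map_smul, map_smul, S.s_alpha_self q, S.s_alpha_of_cartan hB]
  module

theorem s_apply_add_plane_left {p q : Fin n} {A : ℝ}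
    (hA : A * ⟪S.α p, S.α p⟫ = 2 * ⟪S.α q, S.α p⟫) (x : V) (u v : ℝ) :
    S.s p (x + u • S.α p + v • S.α q) =
      x + (-u - A * v - 2 * ⟪S.α p, x⟫ / ⟪S.α p, S.α p⟫) • S.α p + v • S.α q := by
  rw [map_add, map_add, map_smul, map_smul, S.s_alpha_self p, S.s_alpha_of_cartan hA,
    S.s_apply p x]
  module

theorem s_apply_add_plane_right {p q : Fin n} {B : ℝ}
    (hB : B * ⟪S.α q, S.α q⟫ = 2 * ⟪S.α p, S.α q⟫) (x : V) (u v : ℝ) :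
    S.s q (x + u • S.α p + v • S.α q) =
      x + u • S.α p + (-B * u - v - 2 * ⟪S.α q, x⟫ / ⟪S.α q, S.α q⟫) • S.α q := by
  rw [map_add, map_add, map_smul, map_smul, S.s_alpha_self q, S.s_alpha_of_cartan hB,
    S.s_apply q x]
  module

theorem dihedral {p q : Fin n} (hpq : p ≠ q) :
    ∃ m, 2 ≤ m ∧ S.wordProd (altWord q p m) = S.wordProd (altWord p q m) ∧
      ∀ t < m, ∃ a b : ℝ, S.wordProd (altWord q p t).reverse (S.α p) = a • S.α p + b • S.α q ∧
        0 ≤ a ∧ 0 ≤ b := by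
  obtain ⟨A, B, m, hA, hB, hABm⟩ := S.cartan_cases hpq
  have hα : S.α p = (1 : ℝ) • S.α p + (0 : ℝ) • S.α q := by simp
  have hx (x : V) : x = x + (0 : ℝ) • S.α p + (0 : ℝ) • S.α q := by simp
  rcases hABm with ⟨rfl, rfl, hm⟩ | ⟨rfl, rfl, hm⟩ | ⟨rfl, rfl, hm⟩ | ⟨rfl, rfl, hm⟩ |
    ⟨rfl, rfl, hm⟩ | ⟨rfl, rfl, hm⟩
  all_goals
    refine ⟨m, by omega, LinearIsometryEquiv.ext fun x => ?_, fun t ht => ?_⟩ <;> subst hm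
    · simp only [altWord, wordProd_cons_apply, wordProd_nil, LinearIsometryEquiv.coe_one, id_eq]
      rw [hx x]
      simp only [S.s_apply_add_plane_left hA, S.s_apply_add_plane_right hB]
      match_scalars <;> ring
    · interval_cases t <;> exact ⟨_, _, by
        conv_lhs => rw [hα]; simp only [altWord, List.reverse_cons, List.reverse_nil,
          List.nil_append, List.cons_append, wordProd_cons_apply, wordProd_nil,
          LinearIsometryEquiv.coe_one, id_eq, S.s_apply_plane_left hA, S.s_apply_plane_right hB],
        by norm_num, by norm_num⟩

/-- Walk down from `w` along `sⱼ sₖ sⱼ …` as long as the length drops; the braid relation stops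
the walk before `m` steps. -/
theorem exists_last_descent {w : V ≃ₗᵢ[ℝ] V} (hw : w ∈ S.W) {j k : Fin n} {m : ℕ} (hm : 2 ≤ m)
    (hbraid : S.wordProd (altWord j k m) = S.wordProd (altWord k j m))
    (hj : S.length (w * S.s j) < S.length w) (hk : S.length w < S.length (w * S.s k)) :
    ∃ t, 1 ≤ t ∧ t < m ∧ S.length (w * S.wordProd (altWord j k t)) + t = S.length w ∧
      S.length (w * S.wordProd (altWord j k (t + 1))) + (t + 1) ≠ S.length w := by
  classical
  let P t := S.length (w * S.wordProd (altWord j k t)) + t = S.length w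
  have hP1 : P 1 := by
    have := S.length_mul_s_cases hw j
    simp only [P, altWord, wordProd_singleton]
    omega
  have hPm : ¬ P m := by
    obtain ⟨m', rfl⟩ : ∃ m', m = m' + 1 := ⟨m - 1, by omega⟩
    have hle := S.length_le_mul_wordProd (S.W.mul_mem hw (S.s_mem_W k)) (altWord j k m')
    rw [mul_assoc, ← wordProd_cons, ← altWord, ← hbraid] at hle
    have := S.length_mul_s_cases hw k
    simp only [P, altWord_length] at hle ⊢
    omega
  have hPt : P (Nat.findGreatest P m) := Nat.findGreatest_spec (by omega) hP1
  have htm : Nat.findGreatest P m < m :=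
    lt_of_le_of_ne (Nat.findGreatest_le m) fun h => hPm (h ▸ hPt)
  exact ⟨_, Nat.le_findGreatest (by omega) hP1, htm, hPt,
    Nat.findGreatest_is_greatest (P := P) (Nat.lt_succ_self _) htm⟩

/-- The walk of `exists_last_descent` ends at an element `z` of the coset `w ⟨sⱼ, sₖ⟩` with
ascents `j` and `k`. -/
theorem exists_double_ascent {w : V ≃ₗᵢ[ℝ] V} (hw : w ∈ S.W) {j k : Fin n} {m : ℕ} (hm : 2 ≤ m)
    (hbraid : S.wordProd (altWord j k m) = S.wordProd (altWord k j m))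
    (hj : S.length (w * S.s j) < S.length w) (hk : S.length w < S.length (w * S.s k)) :
    ∃ t < m, ∃ z, z = w * S.wordProd (altWord j k t) ∧ S.length z < S.length w ∧
      S.length z < S.length (z * S.s j) ∧ S.length z < S.length (z * S.s k) := by
  obtain ⟨t, ht1, htm, hPt, hPt'⟩ := S.exists_last_descent hw hm hbraid hj hk
  obtain ⟨r, rfl⟩ : ∃ r, t = r + 1 := ⟨t - 1, by omega⟩
  obtain ⟨x, y, hxy, hx, hy⟩ := exists_altWord_succ_succ j k r
  have hzx : w * S.wordProd (altWord j k (r + 1)) * S.s x = w * S.wordProd (altWord j k r) := by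
    rw [hx, wordProd_append, wordProd_singleton, mul_assoc, mul_assoc, S.s_mul_self, mul_one]
  have hzy : w * S.wordProd (altWord j k (r + 1)) * S.s y =
      w * S.wordProd (altWord j k (r + 1 + 1)) := by
    rw [hy, wordProd_append, wordProd_singleton, mul_assoc]
  set z := w * S.wordProd (altWord j k (r + 1))
  have hzW : z ∈ S.W := S.W.mul_mem hw (S.wordProd_mem_W _)
  have hlx := S.length_le_mul_wordProd hw (altWord j k r)
  have hcx := S.length_mul_s_cases hzW x
  have hcy := S.length_mul_s_cases hzW y
  rw [hzx] at hcx
  rw [hzy] at hcy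
  rw [altWord_length] at hlx
  have ascent_x : S.length z < S.length (z * S.s x) := by rw [hzx]; omega
  have ascent_y : S.length z < S.length (z * S.s y) := by rw [hzy]; omega
  refine ⟨r + 1, htm, z, rfl, by omega, ?_⟩
  rcases hxy with ⟨rfl, rfl⟩ | ⟨rfl, rfl⟩
  exacts [⟨ascent_x, ascent_y⟩, ⟨ascent_y, ascent_x⟩]

def IsNonneg (x : V) : Prop := ∀ l, 0 ≤ S.c x l

theorem isNonneg_alpha (k : Fin n) : S.IsNonneg (S.α k) := fun l => by
  rw [c_alpha]; split_ifs <;> norm_num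

theorem IsNonneg.smul_add_smul {x y : V} (hx : S.IsNonneg x) (hy : S.IsNonneg y) {a b : ℝ}
    (ha : 0 ≤ a) (hb : 0 ≤ b) : S.IsNonneg (a • x + b • y) := fun l => by
  rw [c_add, c_smul, c_smul]
  exact add_nonneg (mul_nonneg ha (hx l)) (mul_nonneg hb (hy l))

theorem Dominant.inner_nonneg {x v : V} (hx : S.Dominant x) (hv : S.IsNonneg v) :
    0 ≤ ⟪x, v⟫ := by
  rw [← S.sum_c_smul_alpha v, inner_sum]
  exact Finset.sum_nonneg fun l _ => by rw [real_inner_smul_right]; exact mul_nonneg (hv l) (hx l)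

theorem isNonneg_apply_alpha {w : V ≃ₗᵢ[ℝ] V} (hw : w ∈ S.W) {k : Fin n}
    (hk : S.length w < S.length (w * S.s k)) : S.IsNonneg (w (S.α k)) := by
  induction hN : S.length w using Nat.strong_induction_on generalizing w k with
  | _ N ih =>
  subst hN
  by_cases h0 : S.length w = 0
  · rw [S.eq_one_of_length_eq_zero hw h0]
    exact S.isNonneg_alpha k
  obtain ⟨j, hj⟩ := S.exists_length_mul_s_lt hw h0
  have hjk : k ≠ j := by rintro rfl; omega
  obtain ⟨m, hm, hbraid, hpos⟩ := S.dihedral hjk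
  obtain ⟨t, htm, z, rfl, hlt, hascj, hasck⟩ :=
    S.exists_double_ascent hw hm hbraid (by omega) hk
  obtain ⟨a, b, hab, ha, hb⟩ := hpos t htm
  have hzW := S.W.mul_mem hw (S.wordProd_mem_W (altWord j k t))
  have hw_eq : w (S.α k) = a • (w * S.wordProd (altWord j k t)) (S.α k) +
      b • (w * S.wordProd (altWord j k t)) (S.α j) := by
    rw [← map_smul, ← map_smul, ← map_add, ← hab, wordProd_reverse]
    simp
  rw [hw_eq]
  exact (ih _ hlt hzW hasck rfl).smul_add_smul S (ih _ hlt hzW hascj rfl) ha hb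

theorem isNonneg_neg_apply_alpha {w : V ≃ₗᵢ[ℝ] V} (hw : w ∈ S.W) {k : Fin n}
    (hk : S.length (w * S.s k) < S.length w) : S.IsNonneg (-w (S.α k)) := by
  have h := S.isNonneg_apply_alpha (S.W.mul_mem hw (S.s_mem_W k)) (k := k)
    (by rwa [mul_assoc, S.s_mul_self, mul_one])
  rwa [LinearIsometryEquiv.coe_mul, Function.comp_apply, S.s_alpha_self, map_neg] at h

theorem apply_eq_self_of_dominant {x : V} (hx : S.Dominant x) {w : V ≃ₗᵢ[ℝ] V} (hw : w ∈ S.W)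
    (hwx : S.Dominant (w x)) : w x = x := by
  induction hN : S.length w using Nat.strong_induction_on generalizing w with
  | _ N ih =>
  subst hN
  by_cases h0 : S.length w = 0
  · rw [S.eq_one_of_length_eq_zero hw h0]; rfl
  obtain ⟨j, hj⟩ := S.exists_length_mul_s_lt hw h0
  have hxj : ⟪x, S.α j⟫ = 0 := by
    have h1 := hwx.inner_nonneg S (S.isNonneg_neg_apply_alpha hw (k := j) (by omega))
    rw [inner_neg_right, LinearIsometryEquiv.inner_map_map] at h1
    linarith [hx j]
  have hwsx : (w * S.s j) x = w x := by
    rw [LinearIsometryEquiv.coe_mul, Function.comp_apply, S.s_apply_of_inner_eq_zero hxj]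
  rw [← hwsx]
  exact ih _ (by omega) (S.W.mul_mem hw (S.s_mem_W j)) (hwsx ▸ hwx) rfl

theorem apply_mem_orbit {w : V ≃ₗᵢ[ℝ] V} (hw : w ∈ S.W) {x₀ y : V} (hy : y ∈ S.orbit x₀) :
    w y ∈ S.orbit x₀ := by
  obtain ⟨u, hu, rfl⟩ := hy
  exact ⟨w * u, S.W.mul_mem hw hu, rfl⟩

theorem InRootLattice.of_mem_orbit {x₀ y : V} (hx₀ : S.InRootLattice x₀) (hy : y ∈ S.orbit x₀) :
    S.InRootLattice y := by
  obtain ⟨w, hw, rfl⟩ := hy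
  exact hx₀.apply_of_mem_W S hw

theorem exists_sum_c_le (x₀ : V) : ∃ C, ∀ y ∈ S.orbit x₀, ∑ k, S.c y k ≤ C := by
  have := Module.Finite.of_basis S.b
  refine ⟨∑ k, ‖LinearMap.toContinuousLinearMap (S.b.coord k)‖ * ‖x₀‖, ?_⟩
  rintro _ ⟨w, -, rfl⟩
  refine Finset.sum_le_sum fun k _ => ?_
  calc S.c (w x₀) k ≤ ‖LinearMap.toContinuousLinearMap (S.b.coord k) (w x₀)‖ := le_abs_self _
    _ ≤ _ := (ContinuousLinearMap.le_opNorm _ _).trans_eq (by rw [LinearIsometryEquiv.norm_map])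

theorem exists_ascent {x₀ y : V} (hx₀ : S.InRootLattice x₀) (hy : y ∈ S.orbit x₀)
    (hnd : ¬ S.Dominant y) :
    ∃ y' ∈ S.orbit x₀, ∑ k, S.c y k + 1 ≤ ∑ k, S.c y' k ∧ ∀ k, S.c y k ≤ S.c y' k := by
  obtain ⟨l, hl⟩ : ∃ l, ⟪y, S.α l⟫ < 0 := by simpa [Dominant] using hnd
  obtain ⟨t, ht, htl⟩ := S.exists_s_apply_eq_sub_zsmul (hx₀.of_mem_orbit S hy) l
  have ht1 : (t : ℝ) ≤ -1 := by
    have : (t : ℝ) < 0 := by nlinarith [S.inner_alpha_self_pos l]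
    exact_mod_cast Int.le_sub_one_of_lt (by exact_mod_cast this : t < 0)
  have hc (k : Fin n) : S.c (S.s l y) k = S.c y k - if l = k then (t : ℝ) else 0 := by
    simp [ht]
  refine ⟨S.s l y, S.apply_mem_orbit (S.s_mem_W l) hy, ?_, fun k => ?_⟩
  · simp only [hc, Finset.sum_sub_distrib, Finset.sum_ite_eq, Finset.mem_univ, if_true]
    linarith
  · rw [hc]
    split_ifs <;> linarith

theorem exists_dominant_ge {x₀ y : V} (hx₀ : S.InRootLattice x₀) (hy : y ∈ S.orbit x₀) :
    ∃ z ∈ S.orbit x₀, S.Dominant z ∧ ∀ k, S.c y k ≤ S.c z k := by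
  obtain ⟨C, hC⟩ := S.exists_sum_c_le x₀
  obtain ⟨N, hN⟩ := exists_nat_ge (C - ∑ k, S.c y k)
  induction N generalizing y with
  | zero =>
    by_contra hcon
    obtain ⟨y', hy', hsum, -⟩ :=
      S.exists_ascent hx₀ hy fun hd => hcon ⟨y, hy, hd, fun _ => le_rfl⟩
    linarith [hC y' hy', (Nat.cast_zero (R := ℝ)) ▸ hN]
  | succ N ih =>
    by_cases hd : S.Dominant y
    · exact ⟨y, hy, hd, fun _ => le_rfl⟩
    obtain ⟨y', hy', hsum, hle⟩ := S.exists_ascent hx₀ hy hd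
    obtain ⟨z, hz, hdz, hz'⟩ := ih hy' (by push_cast at hN; linarith)
    exact ⟨z, hz, hdz, fun k => (hle k).trans (hz' k)⟩

theorem c_le_of_mem_orbit {x₀ y : V} (hx₀ : S.InRootLattice x₀) (hdom : S.Dominant x₀)
    (hy : y ∈ S.orbit x₀) (k : Fin n) : S.c y k ≤ S.c x₀ k := by
  obtain ⟨_, ⟨w, hw, rfl⟩, hdz, hle⟩ := S.exists_dominant_ge hx₀ hy
  simpa [S.apply_eq_self_of_dominant hdom hw hdz] using hle k

theorem c_sum_smul_alpha_finset (K : Finset (Fin n)) (r : Fin n → ℝ) (k : Fin n) :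
    S.c (∑ l ∈ K, r l • S.α l) k = if k ∈ K then r k else 0 := by
  simp [c_sum]

theorem alpha_mem_of_inner_ne_zero {D : Submodule ℝ V} {l : Fin n} (hD : ∀ v ∈ D, S.s l v ∈ D)
    {v : V} (hv : v ∈ D) (hvl : ⟪v, S.α l⟫ ≠ 0) : S.α l ∈ D := by
  have hcoef : 2 * ⟪S.α l, v⟫ / ⟪S.α l, S.α l⟫ ≠ 0 :=
    div_ne_zero (by rw [real_inner_comm]; simpa using hvl) (S.inner_alpha_self_pos l).ne'
  have hmem : v - S.s l v ∈ D := D.sub_mem hv (hD v hv)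
  rwa [s_apply, sub_sub_cancel, Submodule.smul_mem_iff D hcoef] at hmem

theorem alpha_mem_of_sum_mem {D : Submodule ℝ V} (K : Finset (Fin n))
    (hD : ∀ l ∈ K, ∀ v ∈ D, S.s l v ∈ D) (r : Fin n → ℝ) (hr : ∀ k ∈ K, 0 < r k)
    (hv : ∑ k ∈ K, r k • S.α k ∈ D) : ∀ k ∈ K, S.α k ∈ D := by
  induction K using Finset.strongInduction with
  | H K ih =>
  intro k hk
  set v := ∑ k ∈ K, r k • S.α k
  obtain ⟨l, hl, hvl⟩ : ∃ l ∈ K, ⟪v, S.α l⟫ ≠ 0 := by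
    by_contra! h
    have hv0 : v = 0 := by
      rw [← inner_self_eq_zero (𝕜 := ℝ)]
      calc ⟪v, v⟫ = ⟪v, ∑ l ∈ K, r l • S.α l⟫ := rfl
        _ = ∑ l ∈ K, r l * ⟪v, S.α l⟫ := by simp only [inner_sum, real_inner_smul_right]
        _ = 0 := Finset.sum_eq_zero fun l hl => by rw [h l hl, mul_zero]
    have := congrArg (S.c · k) hv0
    simp only [v, c_sum_smul_alpha_finset, if_pos hk, c_zero] at this
    exact (hr k hk).ne' this
  have hαl := S.alpha_mem_of_inner_ne_zero (hD l hl) hv hvl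
  by_cases hkl : k = l
  · exact hkl ▸ hαl
  have hrest : ∑ k ∈ K.erase l, r k • S.α k ∈ D := by
    rw [← add_sub_cancel_right (∑ k ∈ K.erase l, r k • S.α k) (r l • S.α l),
      Finset.sum_erase_add K _ hl]
    exact D.sub_mem hv (D.smul_mem _ hαl)
  exact ih _ (Finset.erase_ssubset hl) (fun l' hl' => hD l' (Finset.mem_of_mem_erase hl'))
    (fun k' hk' => hr k' (Finset.mem_of_mem_erase hk')) hrest k (Finset.mem_erase.mpr ⟨hkl, hk⟩)

theorem finrank_ker_coord (i : Fin n) : Module.finrank ℝ (LinearMap.ker (S.b.coord i)) = n - 1 := by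
  have := Module.Finite.of_basis S.b
  have hsurj : Function.Surjective (S.b.coord i) := fun y => ⟨y • S.b i, by simp⟩
  have := LinearMap.finrank_range_add_finrank_ker (S.b.coord i)
  rw [LinearMap.range_eq_top.mpr hsurj, finrank_top, Module.finrank_self,
    Module.finrank_eq_card_basis S.b, Fintype.card_fin] at this
  omega

theorem ker_coord_le_of_alpha_mem {D : Submodule ℝ V} {i : Fin n} (h : ∀ k, k ≠ i → S.α k ∈ D) :
    LinearMap.ker (S.b.coord i) ≤ D := by
  intro x hx
  rw [← S.sum_c_smul_alpha x]
  refine D.sum_mem fun k _ => ?_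
  by_cases hki : k = i
  · simp [hki, c_eq_coord, LinearMap.mem_ker.mp hx]
  · exact D.smul_mem _ (h k hki)

theorem finrank_lt_of_le_ker_coord_inf {i j : Fin n} (hij : i ≠ j) {D : Submodule ℝ V}
    (hD : D ≤ LinearMap.ker (S.b.coord i) ⊓ LinearMap.ker (S.b.coord j)) :
    Module.finrank ℝ D < n - 1 := by
  have := Module.Finite.of_basis S.b
  have hlt : LinearMap.ker (S.b.coord i) ⊓ LinearMap.ker (S.b.coord j) <
      LinearMap.ker (S.b.coord i) :=
    inf_lt_left.mpr fun h => by simpa using h (show S.b j ∈ _ by simp [hij])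
  calc Module.finrank ℝ D ≤ _ := Submodule.finrank_mono hD
    _ < _ := Submodule.finrank_lt_finrank_of_lt hlt
    _ = n - 1 := S.finrank_ker_coord i

theorem apply_mem_poly {w : V ≃ₗᵢ[ℝ] V} (hw : w ∈ S.W) {m : Fin n → ℕ} {x : V}
    (hx : x ∈ S.poly m) : w x ∈ S.poly m := by
  have : S.poly m ⊆ (w.toLinearEquiv : V →ₗ[ℝ] V) ⁻¹' S.poly m :=
    convexHull_min (fun y hy => subset_convexHull ℝ _ (S.apply_mem_orbit hw hy))
      ((convex_convexHull ℝ _).linear_preimage _)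
  exact this hx

theorem s_apply_mem_F {m : Fin n → ℕ} {I : Set (Fin n)} {l : Fin n} (hl : l ∉ I) {x : V}
    (hx : x ∈ S.F_ m I) : S.s l x ∈ S.F_ m I := by
  refine ⟨S.apply_mem_poly (S.s_mem_W l) hx.1, fun i hi => ?_⟩
  rw [s_apply, c_sub, c_smul, c_alpha, if_neg (show l ≠ i from fun h => hl (h ▸ hi)), mul_zero,
    sub_zero]
  exact hx.2 i hi

theorem mem_Pw_of_mem_orbit {m : Fin n → ℕ} {y : V} (hy : y ∈ S.orbit (S.lam m)) : y ∈ S.Pw m :=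
  ⟨subset_convexHull ℝ _ hy, (S.inRootLattice_lam m).of_mem_orbit S hy⟩

theorem lam_mem_P (m : Fin n → ℕ) (I : Set (Fin n)) : S.lam m ∈ S.P_ m I :=
  ⟨S.mem_Pw_of_mem_orbit ⟨1, S.W.one_mem, rfl⟩, fun i _ => S.c_lam m i⟩

theorem c_le_of_wle {μ ν : V} (h : S.wle μ ν) (k : Fin n) : S.c μ k ≤ S.c ν k := by
  obtain ⟨a, ha⟩ := h
  have := congrArg (S.c · k) ha
  simp only [c_sub, c_sum_smul_alpha] at this
  linarith [(a k).cast_nonneg (α := ℝ)]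

/-- The vertices of `F_{i}` are the orbit points in `P_{i}`, whose `j`-th coordinate lies between
that of `η` and `mⱼ`. -/
theorem c_eq_of_mem_F {m : Fin n → ℕ} (hdom : S.Dominant (S.lam m)) {i j : Fin n} {η : V}
    (hleast : ∀ μ ∈ S.P_ m {i}, S.wle η μ) (hj : S.c η j = m j) {x : V}
    (hx : x ∈ S.F_ m {i}) : S.c x j = m j := by
  have hle (y) (hy : y ∈ S.orbit (S.lam m)) (k) : S.c y k ≤ m k :=
    S.c_lam m k ▸ S.c_le_of_mem_orbit (S.inRootLattice_lam m) hdom hy k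
  refine eq_of_mem_convexHull_of_forall_le (f := S.b.coord i) (g := S.b.coord j)
    (fun y hy => hle y hy i) (fun y hy hyi => le_antisymm (hle y hy j) ?_) hx.1 (hx.2 i rfl)
  exact hj ▸ S.c_le_of_wle (hleast y ⟨S.mem_Pw_of_mem_orbit hy, fun i' hi' => hi' ▸ hyi⟩) j

/-- `λ - η` is a direction of `F_{i}` with positive coefficients off `i`, and the directions are
stable under the `sₗ`, `l ≠ i`. -/
theorem alpha_mem_vectorSpan_F {m : Fin n → ℕ} {i : Fin n} {η : V} (hη : η ∈ S.P_ m {i})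
    (hlam : S.wle η (S.lam m)) (hne : ∀ j, j ≠ i → S.c η j ≠ m j) {k : Fin n} (hk : k ≠ i) :
    S.α k ∈ vectorSpan ℝ (S.F_ m {i}) := by
  obtain ⟨a, ha⟩ := hlam
  have hcoef (l : Fin n) : (a l : ℝ) = m l - S.c η l := by
    have := congrArg (S.c · l) ha
    simp only [c_sub, c_lam, c_sum_smul_alpha] at this
    linarith
  have hsum : ∑ l ∈ Finset.univ.erase i, (a l : ℝ) • S.α l = S.lam m - η := by
    rw [ha, ← Finset.sum_erase_add _ _ (Finset.mem_univ i), hcoef i, hη.2 i rfl, sub_self,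
      zero_smul, add_zero]
  refine S.alpha_mem_of_sum_mem (Finset.univ.erase i)
    (fun l hl v hv => apply_mem_vectorSpan (φ := (S.s l).toLinearEquiv)
      (fun x hx => S.s_apply_mem_F (by simpa using Finset.ne_of_mem_erase hl) hx) hv)
    (fun l => a l) (fun l hl => ?_) ?_ k (by simp [hk])
  · rw [hcoef]
    exact sub_pos.2 (lt_of_le_of_ne (S.c_le_of_wle ⟨a, ha⟩ l |>.trans_eq (S.c_lam m l))
      (hne l (Finset.ne_of_mem_erase hl)))
  · rw [hsum]
    exact vsub_mem_vectorSpan ℝ ⟨(S.lam_mem_P m {i}).1.1, fun i' _ => S.c_lam m i'⟩ ⟨hη.1.1, hη.2⟩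

end RootData

end

variable {n : ℕ}

theorem coordinate_face_facet_criterion_general (S : RootData n E) (m : Fin n → ℕ)
    (hdom : S.Dominant (S.lam m))
    (i : Fin n) (η : E) (hη : η ∈ S.P_ m {i}) (hleast : ∀ μ ∈ S.P_ m {i}, S.wle η μ)
    (ω : Fin n → E) (hω : ∀ j, S.IsCoweight j (ω j)) :
    Module.finrank ℝ
        (Submodule.span ℝ {x : E | ∃ μ ∈ S.F_ m {i}, ∃ ν ∈ S.F_ m {i}, x = μ - ν}) = n - 1 ↔
      ∀ j, j ≠ i → ⟪η, ω j⟫ ≠ (m j : ℝ) := by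
  have hker_i : vectorSpan ℝ (S.F_ m {i}) ≤ LinearMap.ker (S.b.coord i) :=
    vectorSpan_le_ker fun x hx => hx.2 i rfl
  rw [span_sub_eq_vectorSpan]
  simp only [S.inner_eq_c_of_isCoweight (hω _)]
  constructor
  · intro hrank j hji hj
    have hker_j : vectorSpan ℝ (S.F_ m {i}) ≤ LinearMap.ker (S.b.coord j) :=
      vectorSpan_le_ker fun x hx => S.c_eq_of_mem_F hdom hleast hj hx
    exact (S.finrank_lt_of_le_ker_coord_inf (Ne.symm hji) (le_inf hker_i hker_j)).ne hrank
  · intro hne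
    have hker_le : LinearMap.ker (S.b.coord i) ≤ vectorSpan ℝ (S.F_ m {i}) :=
      S.ker_coord_le_of_alpha_mem fun k hk =>
        S.alpha_mem_vectorSpan_F hη (hleast _ (S.lam_mem_P m {i})) hne hk
    rw [le_antisymm hker_i hker_le, S.finrank_ker_coord]

/-- a coordinate face `F_i` is a facet (has dimension `n - 1`) iff
`(ηᵢ, ω̃ⱼ) ≠ mⱼ` for all `j ≠ i`, where `ηᵢ` is the least element of `P_i` and `ω̃ⱼ`
are the fundamental coweights. -/
theorem coordinate_face_facet_criterion (S : RootData n E) (m : Fin n → ℕ)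
    (hdom : S.Dominant (S.lam m)) (hint : S.IntegralDom m)
    (i : Fin n) (η : E) (hη : η ∈ S.P_ m {i}) (hleast : ∀ μ ∈ S.P_ m {i}, S.wle η μ)
    (ω : Fin n → E) (hω : ∀ j, S.IsCoweight j (ω j)) :
    Module.finrank ℝ
        (Submodule.span ℝ {x : E | ∃ μ ∈ S.F_ m {i}, ∃ ν ∈ S.F_ m {i}, x = μ - ν}) = n - 1 ↔
      ∀ j, j ≠ i → ⟪η, ω j⟫ ≠ (m j : ℝ) :=
  coordinate_face_facet_criterion_general S m hdom i η hη hleast ω hω
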